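/- arXiv:2007.11944 — 3 statements merged into one kernel-verified Lean document; each statement's English description precedes it below -/
import Mathlib

section
/- Let n ≥ 1 and let V : ℝⁿ → ℝ be smooth and L, B : ℝⁿ → ℝⁿ smooth vector fields. Define T_{ab} = ½(∂_a L_b + ∂_b L_a) and S_{ab} = ½(∂_a B_b + ∂_b B_a). Assume: (i) T and S are Killing tensors; (ii) ∂_a(L_b ∂_b V) = −2 T_{ab} ∂_b V for all a; (iii) ∂_a(B_b ∂_b V) = −2 S_{ab} ∂_b V − 2 L_a for all a (all sums over b). Then for every twice-differentiable curve q : ℝ → ℝⁿ with q̈^a(t) = −∂_a V(q(t)), the function I₂(t) = −(t³/3) T_{ab} q̇^a q̇^b + t² L_a q̇^a + (t³/3) L_a ∂_a V − t S_{ab} q̇^a q̇^b + B_a q̇^a + t B_a ∂_a V (all tensor fields evaluated at q(t)) is constant. -/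
/-- Partial derivative of a scalar field on ℝⁿ in the `a`-th coordinate direction. -/
noncomputable def pd {n : ℕ} (f : (Fin n → ℝ) → ℝ) (a : Fin n) (x : Fin n → ℝ) : ℝ :=
  fderiv ℝ f x (Pi.single a 1)

lemma clm_apply_eq_sum {n : ℕ} (D : (Fin n → ℝ) →L[ℝ] ℝ) (v : Fin n → ℝ) :
    D v = ∑ a, v a * D (Pi.single a 1) := by
  have hv : v = ∑ a, v a • (Pi.single a 1 : Fin n → ℝ) := by
    funext j
    simp [Finset.sum_apply, Pi.single_apply]
  conv_lhs => rw [hv]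
  rw [map_sum]
  simp [smul_eq_mul]

lemma contDiff_pd {n : ℕ} {f : (Fin n → ℝ) → ℝ} (hf : ContDiff ℝ (⊤ : ℕ∞) f) (a : Fin n) :
    ContDiff ℝ (⊤ : ℕ∞) (fun x => pd f a x) :=
  (hf.fderiv_right (by simp)).clm_apply contDiff_const

lemma hasDerivAt_comp_curve {n : ℕ} {f : (Fin n → ℝ) → ℝ} (hf : ContDiff ℝ (⊤ : ℕ∞) f)
    {q q' : ℝ → Fin n → ℝ} {t : ℝ} (hq : HasDerivAt q (q' t) t) :
    HasDerivAt (fun s => f (q s)) (∑ a, pd f a (q t) * q' t a) t := by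
  have hd : HasFDerivAt f (fderiv ℝ f (q t)) (q t) :=
    (hf.differentiable (by simp) (q t)).hasFDerivAt
  have h := hd.comp_hasDerivAt t hq
  convert h using 1
  · rfl
  · rfl
  · rfl
  rw [clm_apply_eq_sum]
  simp [pd, mul_comm]

lemma cyc_sum {n : ℕ} (F : Fin n → Fin n → Fin n → ℝ) :
    (∑ a, ∑ b, ∑ c, F a b c) = ∑ a, ∑ b, ∑ c, F c a b := by
  rw [Finset.sum_comm]
  refine Finset.sum_congr rfl fun b _ => ?_
  rw [Finset.sum_comm]

lemma killing_sum {n : ℕ} (K : (Fin n → ℝ) → Fin n → Fin n → ℝ)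
    (hkill : ∀ x a b c, pd (fun y => K y a b) c x + pd (fun y => K y b c) a x
        + pd (fun y => K y c a) b x = 0) (x v : Fin n → ℝ) :
    (∑ a, ∑ b, ∑ c, pd (fun y => K y a b) c x * v a * v b * v c) = 0 := by
  set G : Fin n → Fin n → Fin n → ℝ :=
    fun a b c => pd (fun y => K y a b) c x * v a * v b * v c with hG
  have h1 : (∑ a, ∑ b, ∑ c, G a b c) = ∑ a, ∑ b, ∑ c, G c a b := cyc_sum G
  have h2 : (∑ a, ∑ b, ∑ c, G a b c) = ∑ a, ∑ b, ∑ c, G b c a := by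
    rw [cyc_sum G, cyc_sum (fun a b c => G c a b)]
  have h3 : (∑ a, ∑ b, ∑ c, (G a b c + G b c a + G c a b)) = 0 := by
    refine Finset.sum_eq_zero fun a _ => Finset.sum_eq_zero fun b _ =>
      Finset.sum_eq_zero fun c _ => ?_
    have h := hkill x a b c
    simp only [hG]
    linear_combination (v a * v b * v c) * h
  have h4 : (∑ a, ∑ b, ∑ c, (G a b c + G b c a + G c a b))
      = (∑ a, ∑ b, ∑ c, G a b c) + (∑ a, ∑ b, ∑ c, G b c a)
        + (∑ a, ∑ b, ∑ c, G c a b) := by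
    simp [Finset.sum_add_distrib]
  have h5 : (3:ℝ) * (∑ a, ∑ b, ∑ c, G a b c) = 0 := by
    rw [h4, ← h1, ← h2] at h3; linarith
  linarith

lemma swap_idx {n : ℕ} (M : Fin n → Fin n → ℝ) (hM : ∀ a b, M a b = M b a)
    (w u : Fin n → ℝ) :
    (∑ a, ∑ b, M a b * w a * u b) = ∑ a, ∑ b, M a b * w b * u a := by
  rw [Finset.sum_comm]
  refine Finset.sum_congr rfl fun a _ => Finset.sum_congr rfl fun b _ => ?_
  rw [hM a b]

lemma sum2_add {n : ℕ} (f g : Fin n → Fin n → ℝ) :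
    (∑ a, ∑ b, (f a b + g a b)) = (∑ a, ∑ b, f a b) + (∑ a, ∑ b, g a b) := by
  simp [Finset.sum_add_distrib]

/-- derivative along the trajectory of a quadratic form in velocities built
from a symmetric Killing tensor -/
lemma deriv_quad {n : ℕ} (K : (Fin n → ℝ) → Fin n → Fin n → ℝ)
    (hKc : ∀ a b, ContDiff ℝ (⊤ : ℕ∞) fun x => K x a b)
    (hKsymm : ∀ x a b, K x a b = K x b a)
    (hkill : ∀ x a b c, pd (fun y => K y a b) c x + pd (fun y => K y b c) a x
        + pd (fun y => K y c a) b x = 0)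
    (V : (Fin n → ℝ) → ℝ)
    (q q' q'' : ℝ → Fin n → ℝ)
    (hq : ∀ t, HasDerivAt q (q' t) t)
    (hv : ∀ t a, HasDerivAt (fun s => q' s a) (q'' t a) t)
    (heq : ∀ t a, q'' t a = - pd V a (q t)) (t : ℝ) :
    HasDerivAt (fun s => ∑ a, ∑ b, K (q s) a b * q' s a * q' s b)
      (-2 * (∑ a, ∑ b, K (q t) a b * pd V b (q t) * q' t a)) t := by
  have hraw := HasDerivAt.fun_sum (fun a (_ : a ∈ Finset.univ) =>
    HasDerivAt.fun_sum (fun b (_ : b ∈ Finset.univ) =>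
      ((hasDerivAt_comp_curve (hKc a b) (hq t)).fun_mul (hv t a)).fun_mul (hv t b)))
  convert hraw using 1
  · rfl
  · rfl
  have e1 : ∀ a b : Fin n,
      (∑ c, pd (fun y => K y a b) c (q t) * q' t c) * q' t a * q' t b
        = ∑ c, pd (fun y => K y a b) c (q t) * q' t a * q' t b * q' t c := by
    intro a b
    rw [Finset.sum_mul, Finset.sum_mul]
    exact Finset.sum_congr rfl fun c _ => by ring
  have estep : (∑ a, ∑ b, (((∑ c, pd (fun y => K y a b) c (q t) * q' t c) * q' t a
        + K (q t) a b * q'' t a) * q' t b + K (q t) a b * q' t a * q'' t b))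
      = (∑ a, ∑ b, ∑ c, pd (fun y => K y a b) c (q t) * q' t a * q' t b * q' t c)
        + ∑ a, ∑ b, (K (q t) a b * q'' t a * q' t b
            + K (q t) a b * q' t a * q'' t b) := by
    rw [← sum2_add]
    refine Finset.sum_congr rfl fun a _ => Finset.sum_congr rfl fun b _ => ?_
    rw [← e1 a b]; ring
  rw [estep, killing_sum K hkill (q t) (q' t), zero_add]
  have hQswap : (∑ a, ∑ b, K (q t) a b * pd V a (q t) * q' t b)
      = ∑ a, ∑ b, K (q t) a b * pd V b (q t) * q' t a :=
    swap_idx (fun a b => K (q t) a b) (fun a b => hKsymm (q t) a b)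
      (fun a => pd V a (q t)) (q' t)
  have h2 : (∑ a, ∑ b, (K (q t) a b * q'' t a * q' t b
        + K (q t) a b * q' t a * q'' t b))
      = -((∑ a, ∑ b, K (q t) a b * pd V a (q t) * q' t b)
          + (∑ a, ∑ b, K (q t) a b * pd V b (q t) * q' t a)) := by
    have hpt : ∀ a b : Fin n, K (q t) a b * q'' t a * q' t b
        + K (q t) a b * q' t a * q'' t b
        = -(K (q t) a b * pd V a (q t) * q' t b
            + K (q t) a b * pd V b (q t) * q' t a) := by
      intro a b; rw [heq t a, heq t b]; ring
    calc (∑ a, ∑ b, (K (q t) a b * q'' t a * q' t b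
          + K (q t) a b * q' t a * q'' t b))
        = ∑ a, ∑ b, -(K (q t) a b * pd V a (q t) * q' t b
            + K (q t) a b * pd V b (q t) * q' t a) :=
          Finset.sum_congr rfl fun a _ => Finset.sum_congr rfl fun b _ => hpt a b
      _ = -(∑ a, ∑ b, (K (q t) a b * pd V a (q t) * q' t b
            + K (q t) a b * pd V b (q t) * q' t a)) := by
            rw [← Finset.sum_neg_distrib]
            exact Finset.sum_congr rfl fun a _ => by
              rw [← Finset.sum_neg_distrib]
      _ = -((∑ a, ∑ b, K (q t) a b * pd V a (q t) * q' t b)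
          + (∑ a, ∑ b, K (q t) a b * pd V b (q t) * q' t a)) := by rw [sum2_add]
  rw [h2, hQswap]; ring

/-- derivative along the trajectory of `∑ W_a q'^a` -/
lemma deriv_lin {n : ℕ} (W : (Fin n → ℝ) → Fin n → ℝ)
    (hWc : ∀ a, ContDiff ℝ (⊤ : ℕ∞) fun x => W x a)
    (V : (Fin n → ℝ) → ℝ)
    (q q' q'' : ℝ → Fin n → ℝ)
    (hq : ∀ t, HasDerivAt q (q' t) t)
    (hv : ∀ t a, HasDerivAt (fun s => q' s a) (q'' t a) t)
    (heq : ∀ t a, q'' t a = - pd V a (q t)) (t : ℝ) :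
    HasDerivAt (fun s => ∑ a, W (q s) a * q' s a)
      ((∑ a, ∑ b, pd (fun y => W y a) b (q t) * q' t a * q' t b)
        - ∑ a, W (q t) a * pd V a (q t)) t := by
  have hraw := HasDerivAt.fun_sum (fun a (_ : a ∈ Finset.univ) =>
    (hasDerivAt_comp_curve (hWc a) (hq t)).fun_mul (hv t a))
  convert hraw using 1
  · rfl
  · rfl
  have estep : (∑ a, ((∑ c, pd (fun y => W y a) c (q t) * q' t c) * q' t a
        + W (q t) a * q'' t a))
      = (∑ a, ∑ b, pd (fun y => W y a) b (q t) * q' t a * q' t b)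
        + ∑ a, W (q t) a * q'' t a := by
    rw [← Finset.sum_add_distrib]
    refine Finset.sum_congr rfl fun a _ => ?_
    have e1 : (∑ c, pd (fun y => W y a) c (q t) * q' t c) * q' t a
        = ∑ c, pd (fun y => W y a) c (q t) * q' t a * q' t c := by
      rw [Finset.sum_mul]
      exact Finset.sum_congr rfl fun c _ => by ring
    rw [e1]
  rw [estep]
  have h2 : (∑ a, W (q t) a * q'' t a) = -∑ a, W (q t) a * pd V a (q t) := by
    rw [← Finset.sum_neg_distrib]
    exact Finset.sum_congr rfl fun a _ => by rw [heq t a]; ring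
  rw [h2]; ring

lemma symm_quad {n : ℕ} (K : (Fin n → ℝ) → Fin n → Fin n → ℝ)
    (W : (Fin n → ℝ) → Fin n → ℝ)
    (hK : ∀ x a b, K x a b
      = (1/2) * (pd (fun y => W y b) a x + pd (fun y => W y a) b x))
    (x v : Fin n → ℝ) :
    (∑ a, ∑ b, pd (fun y => W y a) b x * v a * v b)
      = ∑ a, ∑ b, K x a b * v a * v b := by
  have pull : ∀ f : Fin n → Fin n → ℝ,
      (∑ a, ∑ b, (1/2 : ℝ) * f a b) = (1/2) * ∑ a, ∑ b, f a b := by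
    intro f; simp [Finset.mul_sum]
  have h1 : (∑ a, ∑ b, pd (fun y => W y b) a x * v a * v b)
      = ∑ a, ∑ b, pd (fun y => W y a) b x * v a * v b := by
    rw [Finset.sum_comm]
    exact Finset.sum_congr rfl fun a _ => Finset.sum_congr rfl fun b _ => by ring
  symm
  calc (∑ a, ∑ b, K x a b * v a * v b)
      = ∑ a, ∑ b, ((1/2) * (pd (fun y => W y b) a x * v a * v b)
          + (1/2) * (pd (fun y => W y a) b x * v a * v b)) :=
        Finset.sum_congr rfl fun a _ => Finset.sum_congr rfl fun b _ => by
          rw [hK x a b]; ring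
    _ = (∑ a, ∑ b, (1/2 : ℝ) * (pd (fun y => W y b) a x * v a * v b))
        + ∑ a, ∑ b, (1/2 : ℝ) * (pd (fun y => W y a) b x * v a * v b) :=
        sum2_add _ _
    _ = ∑ a, ∑ b, pd (fun y => W y a) b x * v a * v b := by
        rw [pull, pull, h1]; ring

theorem firstIntegral_I2 {n : ℕ} (hn : 1 ≤ n)
    (V : (Fin n → ℝ) → ℝ) (hV : ContDiff ℝ (⊤ : ℕ∞) V)
    (L B : (Fin n → ℝ) → Fin n → ℝ)
    (hL : ∀ a, ContDiff ℝ (⊤ : ℕ∞) fun x => L x a)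
    (hB : ∀ a, ContDiff ℝ (⊤ : ℕ∞) fun x => B x a)
    (T S : (Fin n → ℝ) → Fin n → Fin n → ℝ)
    (hT : ∀ x a b, T x a b
      = (1/2) * (pd (fun y => L y b) a x + pd (fun y => L y a) b x))
    (hS : ∀ x a b, S x a b
      = (1/2) * (pd (fun y => B y b) a x + pd (fun y => B y a) b x))
    (hTkill : ∀ x a b c, pd (fun y => T y a b) c x + pd (fun y => T y b c) a x
        + pd (fun y => T y c a) b x = 0)
    (hSkill : ∀ x a b c, pd (fun y => S y a b) c x + pd (fun y => S y b c) a x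
        + pd (fun y => S y c a) b x = 0)
    (hLV : ∀ x a, pd (fun y => ∑ b, L y b * pd V b y) a x
        = -2 * ∑ b, T x a b * pd V b x)
    (hBV : ∀ x a, pd (fun y => ∑ b, B y b * pd V b y) a x
        = -2 * (∑ b, S x a b * pd V b x) - 2 * L x a)
    (q q' q'' : ℝ → Fin n → ℝ)
    (hq : ∀ t, HasDerivAt q (q' t) t) (hq' : ∀ t, HasDerivAt q' (q'' t) t)
    (heq : ∀ t a, q'' t a = - pd V a (q t)) :
    ∀ t₁ t₂ : ℝ,
      -(t₁^3/3) * (∑ a, ∑ b, T (q t₁) a b * q' t₁ a * q' t₁ b)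
        + t₁^2 * (∑ a, L (q t₁) a * q' t₁ a)
        + (t₁^3/3) * (∑ a, L (q t₁) a * pd V a (q t₁))
        - t₁ * (∑ a, ∑ b, S (q t₁) a b * q' t₁ a * q' t₁ b)
        + (∑ a, B (q t₁) a * q' t₁ a)
        + t₁ * (∑ a, B (q t₁) a * pd V a (q t₁))
      = -(t₂^3/3) * (∑ a, ∑ b, T (q t₂) a b * q' t₂ a * q' t₂ b)
        + t₂^2 * (∑ a, L (q t₂) a * q' t₂ a)
        + (t₂^3/3) * (∑ a, L (q t₂) a * pd V a (q t₂))
        - t₂ * (∑ a, ∑ b, S (q t₂) a b * q' t₂ a * q' t₂ b)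
        + (∑ a, B (q t₂) a * q' t₂ a)
        + t₂ * (∑ a, B (q t₂) a * pd V a (q t₂)) := by
  have hTc : ∀ a b, ContDiff ℝ (⊤ : ℕ∞) (fun x => T x a b) := by
    intro a b
    have hfe : (fun x => T x a b)
        = fun x => (1/2) * (pd (fun y => L y b) a x + pd (fun y => L y a) b x) :=
      funext fun x => hT x a b
    rw [hfe]
    exact contDiff_const.mul ((contDiff_pd (hL b) a).add (contDiff_pd (hL a) b))
  have hSc : ∀ a b, ContDiff ℝ (⊤ : ℕ∞) (fun x => S x a b) := by
    intro a b
    have hfe : (fun x => S x a b)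
        = fun x => (1/2) * (pd (fun y => B y b) a x + pd (fun y => B y a) b x) :=
      funext fun x => hS x a b
    rw [hfe]
    exact contDiff_const.mul ((contDiff_pd (hB b) a).add (contDiff_pd (hB a) b))
  have hLVf : ContDiff ℝ (⊤ : ℕ∞) (fun y => ∑ b, L y b * pd V b y) :=
    ContDiff.sum fun b _ => (hL b).mul (contDiff_pd hV b)
  have hBVf : ContDiff ℝ (⊤ : ℕ∞) (fun y => ∑ b, B y b * pd V b y) :=
    ContDiff.sum fun b _ => (hB b).mul (contDiff_pd hV b)
  have hTsymm : ∀ x a b, T x a b = T x b a := by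
    intro x a b; rw [hT, hT]; ring
  have hSsymm : ∀ x a b, S x a b = S x b a := by
    intro x a b; rw [hS, hS]; ring
  have hvc : ∀ t a, HasDerivAt (fun s => q' s a) (q'' t a) t := by
    intro t a
    have h := ((ContinuousLinearMap.proj a :
        (Fin n → ℝ) →L[ℝ] ℝ).hasFDerivAt).comp_hasDerivAt t (hq' t)
    exact h
  suffices h : ∀ t, HasDerivAt (fun u : ℝ =>
      -(u^3/3) * (∑ a, ∑ b, T (q u) a b * q' u a * q' u b)
        + u^2 * (∑ a, L (q u) a * q' u a)
        + (u^3/3) * (∑ a, L (q u) a * pd V a (q u))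
        - u * (∑ a, ∑ b, S (q u) a b * q' u a * q' u b)
        + (∑ a, B (q u) a * q' u a)
        + u * (∑ a, B (q u) a * pd V a (q u))) 0 t by
    intro t₁ t₂
    exact is_const_of_deriv_eq_zero (fun t => (h t).differentiableAt)
      (fun t => (h t).deriv) t₁ t₂
  intro t
  -- the six pieces
  have hA1 := deriv_quad T hTc hTsymm hTkill V q q' q'' hq hvc heq t
  have hB1 := deriv_quad S hSc hSsymm hSkill V q q' q'' hq hvc heq t
  have hA2' := deriv_lin L hL V q q' q'' hq hvc heq t
  rw [symm_quad T L hT (q t) (q' t)] at hA2'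
  have hB2' := deriv_lin B hB V q q' q'' hq hvc heq t
  rw [symm_quad S B hS (q t) (q' t)] at hB2'
  have hA3 : HasDerivAt (fun s => ∑ a, L (q s) a * pd V a (q s))
      (-2 * (∑ a, ∑ b, T (q t) a b * pd V b (q t) * q' t a)) t := by
    have h := hasDerivAt_comp_curve hLVf (hq t)
    convert h using 1
    rw [Finset.mul_sum]
    refine Finset.sum_congr rfl fun a _ => ?_
    rw [hLV (q t) a, mul_assoc, Finset.sum_mul]
  have hB3 : HasDerivAt (fun s => ∑ a, B (q s) a * pd V a (q s))
      (-2 * (∑ a, ∑ b, S (q t) a b * pd V b (q t) * q' t a)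
        - 2 * (∑ a, L (q t) a * q' t a)) t := by
    have h := hasDerivAt_comp_curve hBVf (hq t)
    convert h using 1
    rw [Finset.mul_sum, Finset.mul_sum, ← Finset.sum_sub_distrib]
    refine Finset.sum_congr rfl fun a _ => ?_
    rw [hBV (q t) a]
    have h1 : (∑ b, S (q t) a b * pd V b (q t)) * q' t a
        = ∑ b, S (q t) a b * pd V b (q t) * q' t a := by rw [Finset.sum_mul]
    linear_combination (2 : ℝ) * h1
  -- time polynomials
  have hp3n : HasDerivAt (fun s : ℝ => -(s^3/3)) (-t^2) t := by
    have h := ((hasDerivAt_pow 3 t).div_const 3).neg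
    exact h.congr_deriv (by norm_num)
  have hp2 : HasDerivAt (fun s : ℝ => s^2) (2*t) t := by
    have h := hasDerivAt_pow 2 t
    exact h.congr_deriv (by norm_num)
  have hp3 : HasDerivAt (fun s : ℝ => s^3/3) (t^2) t := by
    have h := (hasDerivAt_pow 3 t).div_const 3
    exact h.congr_deriv (by norm_num)
  have hfull := ((((((hp3n.fun_mul hA1).fun_add (hp2.fun_mul hA2')).fun_add
      (hp3.fun_mul hA3)).fun_sub ((hasDerivAt_id t).fun_mul hB1)).fun_add hB2').fun_add
      ((hasDerivAt_id t).fun_mul hB3))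
  convert hfull using 1
  · rfl
  · rfl
  · rfl
  beta_reduce
  simp only [id_eq]
  ring
end

section
/- Let n ≥ 1, let λ ≠ 0 be real, let V : ℝⁿ → ℝ be smooth, and let L : ℝⁿ → ℝⁿ be a Killing vector field (∂_a L_b + ∂_b L_a = 0) satisfying ∂_a(L_b ∂_b V) = −λ² L_a for all a and q (sum over b). Then for every twice-differentiable curve q : ℝ → ℝⁿ with q̈^a(t) = −∂_a V(q(t)), the function I(t) = e^{λt} ( λ L_a(q(t)) q̇^a + L_a(q(t)) ∂_a V(q(t)) ) is constant. -/
lemma clm_apply_sum {n : ℕ} (φ : (Fin n → ℝ) →L[ℝ] ℝ) (v : Fin n → ℝ) :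
    φ v = ∑ b, v b * φ (Pi.single b 1) := by
  conv_lhs => rw [← Finset.univ_sum_single v]
  rw [map_sum]
  refine Finset.sum_congr rfl fun b _ => ?_
  have h : (Pi.single b (v b) : Fin n → ℝ) = v b • (Pi.single b 1 : Fin n → ℝ) := by
    ext i
    by_cases hib : i = b <;> simp [Pi.single_apply, hib]
  rw [h, map_smul, smul_eq_mul]

lemma comp_pd_deriv {n : ℕ} {f : (Fin n → ℝ) → ℝ} (hf : Differentiable ℝ f)
    {q : ℝ → Fin n → ℝ} {v : Fin n → ℝ} {t : ℝ} (hq : HasDerivAt q v t) :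
    HasDerivAt (fun s => f (q s)) (∑ b, v b * pd f b (q t)) t := by
  have h := (hf (q t)).hasFDerivAt.comp_hasDerivAt t hq
  rw [clm_apply_sum (fderiv ℝ f (q t)) v] at h
  exact h

theorem linearFirstIntegral_I3 {n : ℕ} (hn : 1 ≤ n) (lam : ℝ) (hlam : lam ≠ 0)
    (V : (Fin n → ℝ) → ℝ) (hV : ContDiff ℝ (⊤ : ℕ∞) V)
    (L : (Fin n → ℝ) → Fin n → ℝ)
    (hL : ∀ a, ContDiff ℝ (⊤ : ℕ∞) fun x => L x a)
    (hLKV : ∀ x a b, pd (fun y => L y b) a x + pd (fun y => L y a) b x = 0)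
    (hLV : ∀ x a, pd (fun y => ∑ b, L y b * pd V b y) a x = -lam^2 * L x a)
    (q q' q'' : ℝ → Fin n → ℝ)
    (hq : ∀ t, HasDerivAt q (q' t) t) (hq' : ∀ t, HasDerivAt q' (q'' t) t)
    (heq : ∀ t a, q'' t a = - pd V a (q t)) :
    ∀ t₁ t₂ : ℝ,
      Real.exp (lam * t₁) *
        (lam * (∑ a, L (q t₁) a * q' t₁ a) + (∑ a, L (q t₁) a * pd V a (q t₁)))
      = Real.exp (lam * t₂) *
        (lam * (∑ a, L (q t₂) a * q' t₂ a) + (∑ a, L (q t₂) a * pd V a (q t₂))) := by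
  -- smoothness of pd V b
  have hpdV : ∀ b, ContDiff ℝ (⊤ : ℕ∞) fun x => pd V b x := fun b =>
    (ContinuousLinearMap.apply ℝ ℝ (Pi.single b 1 : Fin n → ℝ)).contDiff.comp
      (hV.fderiv_right (by simp))
  have hW : ContDiff ℝ (⊤ : ℕ∞) fun y => ∑ b, L y b * pd V b y :=
    ContDiff.sum fun b _ => (hL b).mul (hpdV b)
  set I : ℝ → ℝ := fun t =>
      Real.exp (lam * t) *
        (lam * (∑ a, L (q t) a * q' t a) + (∑ a, L (q t) a * pd V a (q t))) with hIdef
  have key : ∀ t, HasDerivAt I 0 t := by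
    intro t
    have hq'a : ∀ a, HasDerivAt (fun s => q' s a) (q'' t a) t := fun a => by
      have := (ContinuousLinearMap.proj (R := ℝ) (φ := fun _ : Fin n => ℝ) a).hasFDerivAt.comp_hasDerivAt t (hq' t)
      exact this
    have hLa : ∀ a, HasDerivAt (fun s => L (q s) a)
        (∑ b, q' t b * pd (fun y => L y a) b (q t)) t := fun a =>
      comp_pd_deriv ((hL a).differentiable (by simp)) (hq t)
    have hWq : HasDerivAt (fun s => ∑ a, L (q s) a * pd V a (q s))
        (∑ b, q' t b * pd (fun y => ∑ c, L y c * pd V c y) b (q t)) t :=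
      comp_pd_deriv (hW.differentiable (by simp)) (hq t)
    have hS : HasDerivAt (fun s => ∑ a, L (q s) a * q' s a)
        (∑ a, ((∑ b, q' t b * pd (fun y => L y a) b (q t)) * q' t a + L (q t) a * q'' t a)) t :=
      HasDerivAt.fun_sum fun a _ => (hLa a).mul (hq'a a)
    have hexp : HasDerivAt (fun s => Real.exp (lam * s)) (Real.exp (lam * t) * lam) t := by
      have h1 : HasDerivAt (fun s : ℝ => lam * s) lam t := by
        simpa using (hasDerivAt_id t).const_mul lam
      exact (Real.hasDerivAt_exp (lam * t)).comp t h1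
    have hfull := hexp.mul ((hS.const_mul lam).add hWq)
    have anti : ∀ a b, pd (fun y => L y a) b (q t) = -pd (fun y => L y b) a (q t) :=
      fun a b => by have := hLKV (q t) a b; linarith
    have hK : (∑ a, (∑ b, q' t b * pd (fun y => L y a) b (q t)) * q' t a) = 0 := by
      have e1 : (∑ a, (∑ b, q' t b * pd (fun y => L y a) b (q t)) * q' t a)
          = ∑ a : Fin n, ∑ b : Fin n, q' t b * pd (fun y => L y a) b (q t) * q' t a :=
        Finset.sum_congr rfl fun a _ => Finset.sum_mul _ _ _
      have e2 : (∑ a : Fin n, ∑ b : Fin n, q' t b * pd (fun y => L y a) b (q t) * q' t a)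
          = -∑ a : Fin n, ∑ b : Fin n, q' t b * pd (fun y => L y a) b (q t) * q' t a := by
        calc (∑ a : Fin n, ∑ b : Fin n, q' t b * pd (fun y => L y a) b (q t) * q' t a)
            = ∑ a : Fin n, ∑ b : Fin n, -(q' t a * pd (fun y => L y b) a (q t) * q' t b) :=
              Finset.sum_congr rfl fun a _ => Finset.sum_congr rfl fun b _ => by
                rw [anti a b]; ring
          _ = -∑ a : Fin n, ∑ b : Fin n, q' t a * pd (fun y => L y b) a (q t) * q' t b := by
              simp [Finset.sum_neg_distrib]
          _ = -∑ a : Fin n, ∑ b : Fin n, q' t b * pd (fun y => L y a) b (q t) * q' t a := by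
              rw [Finset.sum_comm]
      linarith [e1, e2]
    have hW' : (∑ b, q' t b * pd (fun y => ∑ c, L y c * pd V c y) b (q t))
        = -lam ^ 2 * (∑ a, L (q t) a * q' t a) := by
      simp_rw [hLV]
      rw [Finset.mul_sum]
      exact Finset.sum_congr rfl fun b _ => by ring
    have hQ : (∑ a, L (q t) a * q'' t a) = -(∑ a, L (q t) a * pd V a (q t)) := by
      rw [← Finset.sum_neg_distrib]
      exact Finset.sum_congr rfl fun a _ => by rw [heq]; ring
    have hsplit : (∑ a, ((∑ b, q' t b * pd (fun y => L y a) b (q t)) * q' t a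
          + L (q t) a * q'' t a)) = -(∑ a, L (q t) a * pd V a (q t)) := by
      rw [Finset.sum_add_distrib, hK, hQ]; ring
    apply hfull.congr_deriv
    rw [hsplit, hW']
    simp only [Pi.add_apply]
    ring
  intro t₁ t₂
  exact is_const_of_deriv_eq_zero (fun t => (key t).differentiableAt)
    (fun t => (key t).deriv) t₁ t₂
end

section
/- Let C be the general Killing tensor on ℝ³ with the 20 parameters a₁,…,a₂₀ (components C_{11} = (a₆/2)y² + (a₁/2)z² + a₄ yz + a₅ y + a₂ z + a₃, C_{12} = (a₁₀/2)z² − (a₆/2)xy − (a₄/2)xz − (a₁₄/2)yz − (a₅/2)x − (a₁₅/2)y + a₁₆ z + a₁₇, C_{13} = (a₁₄/2)y² − (a₄/2)xy − (a₁/2)xz − (a₁₀/2)yz − (a₂/2)x + a₁₈ y − (a₁₁/2)z + a₁₉, C_{22} = (a₆/2)x² + (a₇/2)z² + a₁₄ xz + a₁₅ x + a₁₂ z + a₁₃, C_{23} = (a₄/2)x² − (a₁₄/2)xy − (a₁₀/2)xz − (a₇/2)yz − (a₁₆+a₁₈)x − (a₁₂/2)y − (a₈/2)z + a₂₀, C_{33}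 = (a₁/2)x² + (a₇/2)y² + a₁₀ xy + a₁₁ x + a₈ y + a₉). Then there exists a smooth vector field L : ℝ³ → ℝ³ with C_{ab} = ½(∂_a L_b + ∂_b L_a) if and only if a₁ = a₄ = a₆ = a₇ = a₁₀ = a₁₄ = 0. -/
lemma pd_add {n} {f g : (Fin n → ℝ) → ℝ} {x} (hf : DifferentiableAt ℝ f x)
    (hg : DifferentiableAt ℝ g x) (a : Fin n) :
    pd (fun y => f y + g y) a x = pd f a x + pd g a x := by
  simp [pd, fderiv_fun_add hf hg]

lemma pd_sub {n} {f g : (Fin n → ℝ) → ℝ} {x} (hf : DifferentiableAt ℝ f x)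
    (hg : DifferentiableAt ℝ g x) (a : Fin n) :
    pd (fun y => f y - g y) a x = pd f a x - pd g a x := by
  simp [pd, fderiv_fun_sub hf hg]

lemma pd_mul {n} {f g : (Fin n → ℝ) → ℝ} {x} (hf : DifferentiableAt ℝ f x)
    (hg : DifferentiableAt ℝ g x) (a : Fin n) :
    pd (fun y => f y * g y) a x = pd f a x * g x + f x * pd g a x := by
  simp [pd, fderiv_fun_mul hf hg]; ring

lemma pd_pow {n} {f : (Fin n → ℝ) → ℝ} {x} (hf : DifferentiableAt ℝ f x) (a : Fin n) :
    pd (fun y => f y ^ 2) a x = 2 * f x * pd f a x := by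
  have h : (fun y => f y ^ 2) = fun y => f y * f y := by funext y; ring
  rw [h, pd_mul hf hf]; ring

lemma pd_const {n} (c : ℝ) (a : Fin n) (x) : pd (fun _ => c) a x = 0 := by
  simp [pd]

lemma pd_coord {n} (i a : Fin n) (x) : pd (fun y => y i) a x = if i = a then 1 else 0 := by
  simp [pd, (hasFDerivAt_apply (𝕜 := ℝ) i x).fderiv, Pi.single_apply]

lemma pd_contDiff {n} {f : (Fin n → ℝ) → ℝ} (hf : ContDiff ℝ (⊤ : ℕ∞) f) (a : Fin n) :
    ContDiff ℝ (⊤ : ℕ∞) (pd f a) :=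
  (hf.fderiv_right (by simp)).clm_apply contDiff_const

lemma pd_comm {n} {f : (Fin n → ℝ) → ℝ} (hf : ContDiff ℝ (⊤ : ℕ∞) f) (a b : Fin n) :
    pd (pd f a) b = pd (pd f b) a := by
  funext x
  have hdf : Differentiable ℝ f := hf.differentiable (by simp)
  have hdf2 : Differentiable ℝ (fderiv ℝ f) := (hf.fderiv_right (m := (⊤ : ℕ∞)) (by simp)).differentiable (by simp)
  have hsym := second_derivative_symmetric (f' := fderiv ℝ f)
    (fun y => (hdf y).hasFDerivAt) (hdf2 x).hasFDerivAt
  have key : ∀ v w : Fin n → ℝ,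
      fderiv ℝ (fun y => fderiv ℝ f y v) x w = fderiv ℝ (fderiv ℝ f) x w v := by
    intro v w
    rw [fderiv_clm_apply (hdf2 x) (differentiableAt_const v)]
    simp
  show fderiv ℝ (fun y => fderiv ℝ f y (Pi.single a 1)) x (Pi.single b 1)
      = fderiv ℝ (fun y => fderiv ℝ f y (Pi.single b 1)) x (Pi.single a 1)
  rw [key, key, hsym]

lemma pd_half_add {n} {f g : (Fin n → ℝ) → ℝ} (hf : ContDiff ℝ (⊤ : ℕ∞) f) (hg : ContDiff ℝ (⊤ : ℕ∞) g)
    (k : Fin n) :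
    pd (fun y => (1/2 : ℝ) * (f y + g y)) k = fun x => (1/2 : ℝ) * (pd f k x + pd g k x) := by
  funext x
  have hfd := hf.differentiable (by simp) x
  have hgd := hg.differentiable (by simp) x
  have h := pd_mul (f := fun _ => (1/2 : ℝ)) (g := fun y => f y + g y)
    (differentiableAt_const _) (hfd.add hgd) k (x := x)
  rw [h, pd_const, pd_add hfd hgd]; ring

/-- A general quadratic polynomial on ℝ³. -/
def quad (b11 b22 b33 b12 b13 b23 b1 b2 b3 b0 : ℝ) (p : Fin 3 → ℝ) : ℝ :=
  b11 * p 0 ^ 2 + b22 * p 1 ^ 2 + b33 * p 2 ^ 2 + b12 * (p 0 * p 1) + b13 * (p 0 * p 2)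
    + b23 * (p 1 * p 2) + b1 * p 0 + b2 * p 1 + b3 * p 2 + b0

lemma quad_contDiff (b11 b22 b33 b12 b13 b23 b1 b2 b3 b0 : ℝ) :
    ContDiff ℝ (⊤ : ℕ∞) (quad b11 b22 b33 b12 b13 b23 b1 b2 b3 b0) := by
  unfold quad; fun_prop

lemma pd_quad (b11 b22 b33 b12 b13 b23 b1 b2 b3 b0 : ℝ) (a : Fin 3) (x : Fin 3 → ℝ) :
    pd (quad b11 b22 b33 b12 b13 b23 b1 b2 b3 b0) a x
      = (2*b11*x 0 + b12*x 1 + b13*x 2 + b1) * (if (0 : Fin 3) = a then 1 else 0)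
      + (2*b22*x 1 + b12*x 0 + b23*x 2 + b2) * (if (1 : Fin 3) = a then 1 else 0)
      + (2*b33*x 2 + b13*x 0 + b23*x 1 + b3) * (if (2 : Fin 3) = a then 1 else 0) := by
  unfold quad
  simp (disch := fun_prop) only [pd_add, pd_sub, pd_mul, pd_pow, pd_const, pd_coord]
  fin_cases a <;> norm_num [Fin.ext_iff] <;> ring

/-- A general affine function on ℝ³. -/
def lin (c1 c2 c3 c0 : ℝ) (p : Fin 3 → ℝ) : ℝ := c1 * p 0 + c2 * p 1 + c3 * p 2 + c0

lemma pd_lin (c1 c2 c3 c0 : ℝ) (a : Fin 3) (x : Fin 3 → ℝ) :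
    pd (lin c1 c2 c3 c0) a x
      = c1 * (if (0 : Fin 3) = a then 1 else 0) + c2 * (if (1 : Fin 3) = a then 1 else 0)
        + c3 * (if (2 : Fin 3) = a then 1 else 0) := by
  unfold lin
  simp (disch := fun_prop) only [pd_add, pd_sub, pd_mul, pd_pow, pd_const, pd_coord]
  fin_cases a <;> norm_num [Fin.ext_iff]

lemma pd_quad_fun (b11 b22 b33 b12 b13 b23 b1 b2 b3 b0 : ℝ) (a : Fin 3) :
    pd (quad b11 b22 b33 b12 b13 b23 b1 b2 b3 b0) a
      = lin (2*b11*(if (0:Fin 3) = a then 1 else 0) + b12*(if (1:Fin 3) = a then 1 else 0)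
              + b13*(if (2:Fin 3) = a then 1 else 0))
            (b12*(if (0:Fin 3) = a then 1 else 0) + 2*b22*(if (1:Fin 3) = a then 1 else 0)
              + b23*(if (2:Fin 3) = a then 1 else 0))
            (b13*(if (0:Fin 3) = a then 1 else 0) + b23*(if (1:Fin 3) = a then 1 else 0)
              + 2*b33*(if (2:Fin 3) = a then 1 else 0))
            (b1*(if (0:Fin 3) = a then 1 else 0) + b2*(if (1:Fin 3) = a then 1 else 0)
              + b3*(if (2:Fin 3) = a then 1 else 0)) := by
  funext x
  rw [pd_quad]
  unfold lin
  ring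

lemma pd2_quad (b11 b22 b33 b12 b13 b23 b1 b2 b3 b0 : ℝ) (a b : Fin 3) (x : Fin 3 → ℝ) :
    pd (pd (quad b11 b22 b33 b12 b13 b23 b1 b2 b3 b0) a) b x
      = (2*b11*(if (0:Fin 3) = a then 1 else 0) + b12*(if (1:Fin 3) = a then 1 else 0)
          + b13*(if (2:Fin 3) = a then 1 else 0)) * (if (0:Fin 3) = b then 1 else 0)
      + (b12*(if (0:Fin 3) = a then 1 else 0) + 2*b22*(if (1:Fin 3) = a then 1 else 0)
          + b23*(if (2:Fin 3) = a then 1 else 0)) * (if (1:Fin 3) = b then 1 else 0)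
      + (b13*(if (0:Fin 3) = a then 1 else 0) + b23*(if (1:Fin 3) = a then 1 else 0)
          + 2*b33*(if (2:Fin 3) = a then 1 else 0)) * (if (2:Fin 3) = b then 1 else 0) := by
  rw [pd_quad_fun, pd_lin]

set_option maxHeartbeats 1000000 in
theorem killingTensor_E3_reducible
    (a₁ a₂ a₃ a₄ a₅ a₆ a₇ a₈ a₉ a₁₀ a₁₁ a₁₂ a₁₃ a₁₄ a₁₅ a₁₆ a₁₇ a₁₈ a₁₉ a₂₀ : ℝ)
    (C : (Fin 3 → ℝ) → Fin 3 → Fin 3 → ℝ)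
    (hCsym : ∀ x a b, C x a b = C x b a)
    (hC : ∀ p : Fin 3 → ℝ,
      C p 0 0 = (a₆/2) * (p 1)^2 + (a₁/2) * (p 2)^2 + a₄ * p 1 * p 2
          + a₅ * p 1 + a₂ * p 2 + a₃ ∧
      C p 0 1 = (a₁₀/2) * (p 2)^2 - (a₆/2) * p 0 * p 1 - (a₄/2) * p 0 * p 2
          - (a₁₄/2) * p 1 * p 2 - (a₅/2) * p 0 - (a₁₅/2) * p 1 + a₁₆ * p 2 + a₁₇ ∧
      C p 0 2 = (a₁₄/2) * (p 1)^2 - (a₄/2) * p 0 * p 1 - (a₁/2) * p 0 * p 2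
          - (a₁₀/2) * p 1 * p 2 - (a₂/2) * p 0 + a₁₈ * p 1 - (a₁₁/2) * p 2 + a₁₉ ∧
      C p 1 1 = (a₆/2) * (p 0)^2 + (a₇/2) * (p 2)^2 + a₁₄ * p 0 * p 2
          + a₁₅ * p 0 + a₁₂ * p 2 + a₁₃ ∧
      C p 1 2 = (a₄/2) * (p 0)^2 - (a₁₄/2) * p 0 * p 1 - (a₁₀/2) * p 0 * p 2
          - (a₇/2) * p 1 * p 2 - (a₁₆ + a₁₈) * p 0 - (a₁₂/2) * p 1
          - (a₈/2) * p 2 + a₂₀ ∧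
      C p 2 2 = (a₁/2) * (p 0)^2 + (a₇/2) * (p 1)^2 + a₁₀ * p 0 * p 1
          + a₁₁ * p 0 + a₈ * p 1 + a₉) :
    (∃ L : (Fin 3 → ℝ) → Fin 3 → ℝ,
        (∀ a, ContDiff ℝ (⊤ : ℕ∞) fun x => L x a) ∧
        (∀ x a b, C x a b
          = (1/2) * (pd (fun y => L y b) a x + pd (fun y => L y a) b x)))
    ↔ (a₁ = 0 ∧ a₄ = 0 ∧ a₆ = 0 ∧ a₇ = 0 ∧ a₁₀ = 0 ∧ a₁₄ = 0) := by
  constructor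
  · rintro ⟨L, hL, h⟩
    have hCf : ∀ i j : Fin 3, (fun y => C y i j)
        = fun y => (1/2 : ℝ) * (pd (fun z => L z j) i y + pd (fun z => L z i) j y) :=
      fun i j => funext fun y => h y i j
    have hddC : ∀ i j k l : Fin 3, pd (pd (fun y => C y i j) k) l
        = fun x => (1/2 : ℝ) * (pd (pd (pd (fun z => L z j) i) k) l x
            + pd (pd (pd (fun z => L z i) j) k) l x) := by
      intro i j k l
      rw [hCf i j, pd_half_add (pd_contDiff (hL j) i) (pd_contDiff (hL i) j) k,
        pd_half_add (pd_contDiff (pd_contDiff (hL j) i) k)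
          (pd_contDiff (pd_contDiff (hL i) j) k) l]
    have sw1 : ∀ c i j k : Fin 3, pd (pd (pd (fun z => L z c) i) j) k
        = pd (pd (pd (fun z => L z c) j) i) k := fun c i j k => by
      rw [pd_comm (hL c) i j]
    have sw2 : ∀ c i j k : Fin 3, pd (pd (pd (fun z => L z c) i) j) k
        = pd (pd (pd (fun z => L z c) i) k) j := fun c i j k =>
      pd_comm (pd_contDiff (hL c) i) j k
    have e231 : ∀ c i j k : Fin 3, pd (pd (pd (fun z => L z c) i) j) k
        = pd (pd (pd (fun z => L z c) j) k) i := fun c i j k => by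
      rw [sw1 c i j k, sw2 c j i k]
    have e312 : ∀ c i j k : Fin 3, pd (pd (pd (fun z => L z c) i) j) k
        = pd (pd (pd (fun z => L z c) k) i) j := fun c i j k => by
      rw [sw2 c i j k, sw1 c i k j]
    have e321 : ∀ c i j k : Fin 3, pd (pd (pd (fun z => L z c) i) j) k
        = pd (pd (pd (fun z => L z c) k) j) i := fun c i j k => by
      rw [sw1 c i j k, sw2 c j i k, sw1 c j k i]
    have SV : ∀ i j k l : Fin 3, ∀ x : Fin 3 → ℝ,
        pd (pd (fun y => C y i j) k) l x + pd (pd (fun y => C y k l) i) j x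
          - pd (pd (fun y => C y i k) j) l x - pd (pd (fun y => C y j l) i) k x = 0 := by
      intro i j k l x
      rw [congrFun (hddC i j k l) x, congrFun (hddC k l i j) x,
        congrFun (hddC i k j l) x, congrFun (hddC j l i k) x]
      have c1 := congrFun (e312 j i k l) x
      have c2 := congrFun (sw1 i j k l) x
      have c3 := congrFun (e321 l k i j) x
      have c4 := congrFun (e231 k l i j) x
      linarith
    -- canonical forms of the components
    have hc00 : (fun y => C y 0 0) = quad 0 (a₆/2) (a₁/2) 0 0 a₄ 0 a₅ a₂ a₃ :=
      funext fun p => by rw [(hC p).1]; unfold quad; ring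
    have hc01 : (fun y => C y 0 1)
        = quad 0 0 (a₁₀/2) (-(a₆/2)) (-(a₄/2)) (-(a₁₄/2)) (-(a₅/2)) (-(a₁₅/2)) a₁₆ a₁₇ :=
      funext fun p => by rw [(hC p).2.1]; unfold quad; ring
    have hc02 : (fun y => C y 0 2)
        = quad 0 (a₁₄/2) 0 (-(a₄/2)) (-(a₁/2)) (-(a₁₀/2)) (-(a₂/2)) a₁₈ (-(a₁₁/2)) a₁₉ :=
      funext fun p => by rw [(hC p).2.2.1]; unfold quad; ring
    have hc11 : (fun y => C y 1 1) = quad (a₆/2) 0 (a₇/2) 0 a₁₄ 0 a₁₅ 0 a₁₂ a₁₃ :=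
      funext fun p => by rw [(hC p).2.2.2.1]; unfold quad; ring
    have hc12 : (fun y => C y 1 2)
        = quad (a₄/2) 0 0 (-(a₁₄/2)) (-(a₁₀/2)) (-(a₇/2)) (-(a₁₆+a₁₈)) (-(a₁₂/2))
            (-(a₈/2)) a₂₀ :=
      funext fun p => by rw [(hC p).2.2.2.2.1]; unfold quad; ring
    have hc22 : (fun y => C y 2 2) = quad (a₁/2) (a₇/2) 0 a₁₀ 0 0 a₁₁ a₈ 0 a₉ :=
      funext fun p => by rw [(hC p).2.2.2.2.2]; unfold quad; ring
    have hc10 : (fun y => C y 1 0) = (fun y => C y 0 1) := funext fun y => hCsym y 1 0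
    have hc20 : (fun y => C y 2 0) = (fun y => C y 0 2) := funext fun y => hCsym y 2 0
    have hc21 : (fun y => C y 2 1) = (fun y => C y 1 2) := funext fun y => hCsym y 2 1
    have x0 : Fin 3 → ℝ := fun _ => 0
    have h6 : a₆ = 0 := by
      have hsv := SV 0 0 1 1 x0
      rw [hc00, hc01, hc11] at hsv
      simp only [pd2_quad] at hsv
      norm_num [Fin.ext_iff] at hsv
      linarith
    have h1 : a₁ = 0 := by
      have hsv := SV 0 0 2 2 x0
      rw [hc00, hc02, hc22] at hsv
      simp only [pd2_quad] at hsv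
      norm_num [Fin.ext_iff] at hsv
      linarith
    have h7 : a₇ = 0 := by
      have hsv := SV 1 1 2 2 x0
      rw [hc11, hc12, hc22] at hsv
      simp only [pd2_quad] at hsv
      norm_num [Fin.ext_iff] at hsv
      linarith
    have h4 : a₄ = 0 := by
      have hsv := SV 0 0 1 2 x0
      rw [hc00, hc01, hc02, hc12] at hsv
      simp only [pd2_quad] at hsv
      norm_num [Fin.ext_iff] at hsv
      linarith
    have h14 : a₁₄ = 0 := by
      have hsv := SV 1 1 0 2 x0
      rw [hc11, hc10, hc01, hc02, hc12] at hsv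
      simp only [pd2_quad] at hsv
      norm_num [Fin.ext_iff] at hsv
      linarith
    have h10 : a₁₀ = 0 := by
      have hsv := SV 2 2 0 1 x0
      rw [hc22, hc20, hc21, hc02, hc12, hc01] at hsv
      simp only [pd2_quad] at hsv
      norm_num [Fin.ext_iff] at hsv
      linarith
    exact ⟨h1, h4, h6, h7, h10, h14⟩
  · rintro ⟨h1, h4, h6, h7, h10, h14⟩
    subst h1 h4 h6 h7 h10 h14
    refine ⟨fun y => ![
        quad 0 (-a₁₅) (-a₁₁) a₅ a₂ (2*(a₁₆+a₁₈)) a₃ (2*a₁₇) (2*a₁₉) 0 y,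
        quad (-a₅) 0 (-a₈) a₁₅ (-(2*a₁₈)) a₁₂ 0 a₁₃ (2*a₂₀) 0 y,
        quad (-a₂) (-a₁₂) 0 (-(2*a₁₆)) a₁₁ a₈ 0 0 a₉ 0 y], ?_, ?_⟩
    · intro a
      fin_cases a <;>
        simp only [Fin.zero_eta, Fin.mk_one, Fin.reduceFinMk, Matrix.cons_val_zero,
          Matrix.cons_val_one, Matrix.head_cons, Matrix.cons_val_two, Matrix.tail_cons] <;>
        exact quad_contDiff _ _ _ _ _ _ _ _ _ _
    · intro x a b
      obtain ⟨e00, e01, e02, e11, e12, e22⟩ := hC x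
      fin_cases a <;> fin_cases b <;>
        simp only [Fin.zero_eta, Fin.mk_one, Fin.reduceFinMk, Matrix.cons_val_zero,
          Matrix.cons_val_one, Matrix.head_cons, Matrix.cons_val_two, Matrix.tail_cons] <;>
        [rw [e00]; rw [e01]; rw [e02]; rw [hCsym x 1 0, e01]; rw [e11]; rw [e12];
         rw [hCsym x 2 0, e02]; rw [hCsym x 2 1, e12]; rw [e22]] <;>
        simp only [pd_quad] <;>
        norm_num [Fin.ext_iff] <;> ring
end
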